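/- arXiv:2403.03294 — 3 statements merged into one kernel-verified Lean document; each statement's English description precedes it below -/
import Mathlib

section
/- For complex matrices A (K×K) and B (K×K), the spectral norm of the Hadamard (entrywise) product A ⊙ B is at most ‖A‖_{∞→2} · ‖B‖, where ‖A‖_{∞→2} is the largest ℓ₂ norm of a column of A and ‖B‖ is the spectral norm. -/
open scoped ComplexOrder

noncomputable def specNorm {𝕜 : Type*} [RCLike 𝕜] {m n : Type*} [Fintype m] [Fintype n]
    [DecidableEq n] (A : Matrix m n 𝕜) : ℝ :=
  ‖LinearMap.toContinuousLinearMap (Matrix.toEuclideanLin A)‖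

noncomputable def lamMax {𝕜 : Type*} [RCLike 𝕜] {n : Type*} [Fintype n] [DecidableEq n]
    (A : Matrix n n 𝕜) : ℝ :=
  ⨆ v : Metric.sphere (0 : EuclideanSpace 𝕜 n) 1,
    RCLike.re (inner 𝕜 (Matrix.toEuclideanLin A v) (v : EuclideanSpace 𝕜 n) : 𝕜)

noncomputable def lamMin {𝕜 : Type*} [RCLike 𝕜] {n : Type*} [Fintype n] [DecidableEq n]
    (A : Matrix n n 𝕜) : ℝ :=
  ⨅ v : Metric.sphere (0 : EuclideanSpace 𝕜 n) 1,
    RCLike.re (inner 𝕜 (Matrix.toEuclideanLin A v) (v : EuclideanSpace 𝕜 n) : 𝕜)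

noncomputable def sigmaMin {𝕜 : Type*} [RCLike 𝕜] {m n : Type*} [Fintype m] [Fintype n]
    [DecidableEq n] (A : Matrix m n 𝕜) : ℝ :=
  ⨅ v : Metric.sphere (0 : EuclideanSpace 𝕜 n) 1,
    ‖Matrix.toEuclideanLin A (v : EuclideanSpace 𝕜 n)‖

noncomputable def maxColNorm {𝕜 : Type*} [RCLike 𝕜] {m n : Type*} [Fintype m] [Fintype n]
    (A : Matrix m n 𝕜) : ℝ :=
  ⨆ j : n, Real.sqrt (∑ i, ‖A i j‖ ^ 2)

noncomputable def frobNorm {𝕜 : Type*} [RCLike 𝕜] {m n : Type*} [Fintype m] [Fintype n]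
    (A : Matrix m n 𝕜) : ℝ :=
  Real.sqrt (∑ i, ∑ j, ‖A i j‖ ^ 2)

def khatriRao {m n K : Type*} (A : Matrix m K ℂ) (B : Matrix n K ℂ) :
    Matrix (m × n) K ℂ :=
  Matrix.of fun p k => A p.1 k * B p.2 k

section aux

variable {K : ℕ}

lemma euc_apply (M : Matrix (Fin K) (Fin K) ℂ) (x : EuclideanSpace ℂ (Fin K)) (i : Fin K) :
    Matrix.toEuclideanLin M x i = ∑ j, M i j * x j := by
  rw [Matrix.toEuclideanLin_apply]
  rfl

lemma spec_apply_le (M : Matrix (Fin K) (Fin K) ℂ) (x : EuclideanSpace ℂ (Fin K)) :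
    ‖Matrix.toEuclideanLin M x‖ ≤ specNorm M * ‖x‖ := by
  have h := ContinuousLinearMap.le_opNorm
    (LinearMap.toContinuousLinearMap (Matrix.toEuclideanLin M)) x
  rw [LinearMap.coe_toContinuousLinearMap'] at h
  exact h

lemma coord_le_norm (v : EuclideanSpace ℂ (Fin K)) (j : Fin K) : ‖v j‖ ≤ ‖v‖ := by
  rw [EuclideanSpace.norm_eq]
  exact Real.le_sqrt_of_sq_le <| Finset.single_le_sum
    (f := fun i => ‖v i‖ ^ 2) (fun i _ => by positivity) (Finset.mem_univ j)

set_option maxHeartbeats 1000000 in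
lemma rowNorm_le_specNorm (B : Matrix (Fin K) (Fin K) ℂ) (j : Fin K) :
    Real.sqrt (∑ i, ‖B j i‖ ^ 2) ≤ specNorm B := by
  have hr0 : 0 ≤ Real.sqrt (∑ i, ‖B j i‖ ^ 2) := Real.sqrt_nonneg _
  rcases eq_or_lt_of_le hr0 with h0 | hpos
  · rw [← h0]; exact norm_nonneg _
  have hs0 : (0:ℝ) ≤ ∑ i, ‖B j i‖ ^ 2 := by positivity
  let x : EuclideanSpace ℂ (Fin K) :=
    (WithLp.equiv 2 (Fin K → ℂ)).symm (fun i => starRingEnd ℂ (B j i))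
  have hxi : ∀ i, x i = starRingEnd ℂ (B j i) := fun i => rfl
  have hxnorm : ‖x‖ = Real.sqrt (∑ i, ‖B j i‖ ^ 2) := by
    rw [EuclideanSpace.norm_eq]
    congr 1
    refine Finset.sum_congr rfl fun i _ => ?_
    rw [hxi i, RCLike.norm_conj]
  have hcomp : Matrix.toEuclideanLin B x j = ((∑ i, ‖B j i‖ ^ 2 : ℝ) : ℂ) := by
    rw [euc_apply]
    push_cast
    refine Finset.sum_congr rfl fun i _ => ?_
    rw [hxi i, Complex.mul_conj, Complex.normSq_eq_norm_sq]
    norm_cast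
  have h1 : Real.sqrt (∑ i, ‖B j i‖ ^ 2) * Real.sqrt (∑ i, ‖B j i‖ ^ 2)
      ≤ specNorm B * Real.sqrt (∑ i, ‖B j i‖ ^ 2) := by
    have h2 : ‖Matrix.toEuclideanLin B x j‖ = ∑ i, ‖B j i‖ ^ 2 := by
      rw [hcomp, Complex.norm_real, Real.norm_eq_abs, abs_of_nonneg hs0]
    calc Real.sqrt (∑ i, ‖B j i‖ ^ 2) * Real.sqrt (∑ i, ‖B j i‖ ^ 2)
        = ∑ i, ‖B j i‖ ^ 2 := Real.mul_self_sqrt hs0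
      _ = ‖Matrix.toEuclideanLin B x j‖ := h2.symm
      _ ≤ ‖Matrix.toEuclideanLin B x‖ := coord_le_norm _ j
      _ ≤ specNorm B * ‖x‖ := spec_apply_le B x
      _ = specNorm B * Real.sqrt (∑ i, ‖B j i‖ ^ 2) := by rw [hxnorm]
  exact le_of_mul_le_mul_right h1 hpos

lemma maxColNorm_nonneg (A : Matrix (Fin K) (Fin K) ℂ) : 0 ≤ maxColNorm A :=
  Real.iSup_nonneg fun j => Real.sqrt_nonneg _

lemma colNorm_le (A : Matrix (Fin K) (Fin K) ℂ) (j : Fin K) :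
    Real.sqrt (∑ i, ‖A i j‖ ^ 2) ≤ maxColNorm A := by
  unfold maxColNorm
  exact le_ciSup (Set.Finite.bddAbove
    (Set.finite_range (fun j => Real.sqrt (∑ i, ‖A i j‖ ^ 2)))) j

end aux

theorem stmt3 {K : ℕ} (A B : Matrix (Fin K) (Fin K) ℂ) :
    specNorm (Matrix.hadamard A B) ≤ maxColNorm A * specNorm B := by
  set a := maxColNorm A
  set s := specNorm B
  have ha : 0 ≤ a := maxColNorm_nonneg A
  have hs : 0 ≤ s := norm_nonneg _
  apply ContinuousLinearMap.opNorm_le_bound _ (mul_nonneg ha hs)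
  intro x
  rw [LinearMap.coe_toContinuousLinearMap']
  set y := Matrix.toEuclideanLin (Matrix.hadamard A B) x with hy
  rcases eq_or_lt_of_le (norm_nonneg y) with h0 | hpos
  · rw [← h0]; positivity
  -- key inequality
  have key : ‖y‖ ^ 2 ≤ (a * ‖x‖) * (s * ‖y‖) := by
    have h1 : ‖y‖ ^ 2 = ∑ i, ‖y i‖ ^ 2 := by
      rw [EuclideanSpace.norm_eq, Real.sq_sqrt (by positivity)]
    have h2 : ∀ i, ‖y i‖ ^ 2 ≤ ∑ j, (‖A i j‖ * ‖x j‖) * (‖B i j‖ * ‖y i‖) := by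
      intro i
      have : ‖y i‖ ≤ ∑ j, ‖A i j‖ * ‖B i j‖ * ‖x j‖ := by
        rw [hy, euc_apply]
        refine (norm_sum_le _ _).trans (le_of_eq ?_)
        apply Finset.sum_congr rfl
        intro k _
        simp [Matrix.hadamard]
      calc ‖y i‖ ^ 2 = ‖y i‖ * ‖y i‖ := sq ‖y i‖
        _ ≤ (∑ j, ‖A i j‖ * ‖B i j‖ * ‖x j‖) * ‖y i‖ :=
            mul_le_mul_of_nonneg_right this (norm_nonneg _)
        _ = ∑ j, (‖A i j‖ * ‖x j‖) * (‖B i j‖ * ‖y i‖) := by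
            rw [Finset.sum_mul]; apply Finset.sum_congr rfl; intros; ring
    have h3 : ‖y‖ ^ 2 ≤ ∑ p : Fin K × Fin K,
        (‖A p.1 p.2‖ * ‖x p.2‖) * (‖B p.1 p.2‖ * ‖y p.1‖) := by
      rw [h1, Fintype.sum_prod_type]
      exact Finset.sum_le_sum fun i _ => h2 i
    have h4 := Real.sum_mul_le_sqrt_mul_sqrt (Finset.univ (α := Fin K × Fin K))
      (fun p => ‖A p.1 p.2‖ * ‖x p.2‖) (fun p => ‖B p.1 p.2‖ * ‖y p.1‖)
    have h5 : Real.sqrt (∑ p : Fin K × Fin K, (‖A p.1 p.2‖ * ‖x p.2‖) ^ 2) ≤ a * ‖x‖ := by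
      have e : (∑ p : Fin K × Fin K, (‖A p.1 p.2‖ * ‖x p.2‖) ^ 2) ≤ a ^ 2 * ‖x‖ ^ 2 := by
        rw [Fintype.sum_prod_type_right]
        calc ∑ j, ∑ i, (‖A i j‖ * ‖x j‖) ^ 2
            = ∑ j, (∑ i, ‖A i j‖ ^ 2) * ‖x j‖ ^ 2 := by
              apply Finset.sum_congr rfl; intros j _
              rw [Finset.sum_mul]; apply Finset.sum_congr rfl; intros; ring
          _ ≤ ∑ j, a ^ 2 * ‖x j‖ ^ 2 := by
              apply Finset.sum_le_sum; intro j _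
              apply mul_le_mul_of_nonneg_right _ (by positivity)
              have := colNorm_le A j
              calc ∑ i, ‖A i j‖ ^ 2
                  = Real.sqrt (∑ i, ‖A i j‖ ^ 2) ^ 2 := (Real.sq_sqrt (by positivity)).symm
                _ ≤ a ^ 2 := by apply pow_le_pow_left₀ (Real.sqrt_nonneg _) this
          _ = a ^ 2 * ‖x‖ ^ 2 := by
              rw [← Finset.mul_sum, EuclideanSpace.norm_eq, Real.sq_sqrt (by positivity)]
      calc Real.sqrt (∑ p : Fin K × Fin K, (‖A p.1 p.2‖ * ‖x p.2‖) ^ 2)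
          ≤ Real.sqrt (a ^ 2 * ‖x‖ ^ 2) := Real.sqrt_le_sqrt e
        _ = a * ‖x‖ := by
            rw [Real.sqrt_mul (by positivity), Real.sqrt_sq ha, Real.sqrt_sq (norm_nonneg _)]
    have h6 : Real.sqrt (∑ p : Fin K × Fin K, (‖B p.1 p.2‖ * ‖y p.1‖) ^ 2) ≤ s * ‖y‖ := by
      have e : (∑ p : Fin K × Fin K, (‖B p.1 p.2‖ * ‖y p.1‖) ^ 2) ≤ s ^ 2 * ‖y‖ ^ 2 := by
        rw [Fintype.sum_prod_type]
        calc ∑ i, ∑ j, (‖B i j‖ * ‖y i‖) ^ 2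
            = ∑ i, (∑ j, ‖B i j‖ ^ 2) * ‖y i‖ ^ 2 := by
              apply Finset.sum_congr rfl; intros i _
              rw [Finset.sum_mul]; apply Finset.sum_congr rfl; intros; ring
          _ ≤ ∑ i, s ^ 2 * ‖y i‖ ^ 2 := by
              apply Finset.sum_le_sum; intro i _
              apply mul_le_mul_of_nonneg_right _ (by positivity)
              have := rowNorm_le_specNorm B i
              calc ∑ j, ‖B i j‖ ^ 2
                  = Real.sqrt (∑ j, ‖B i j‖ ^ 2) ^ 2 := (Real.sq_sqrt (by positivity)).symm
                _ ≤ s ^ 2 := by apply pow_le_pow_left₀ (Real.sqrt_nonneg _) this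
          _ = s ^ 2 * ‖y‖ ^ 2 := by
              rw [← Finset.mul_sum, EuclideanSpace.norm_eq, Real.sq_sqrt (by positivity)]
      calc Real.sqrt (∑ p : Fin K × Fin K, (‖B p.1 p.2‖ * ‖y p.1‖) ^ 2)
          ≤ Real.sqrt (s ^ 2 * ‖y‖ ^ 2) := Real.sqrt_le_sqrt e
        _ = s * ‖y‖ := by
            rw [Real.sqrt_mul (by positivity), Real.sqrt_sq hs, Real.sqrt_sq (norm_nonneg _)]
    calc ‖y‖ ^ 2 ≤ _ := h3
      _ ≤ _ := h4
      _ ≤ (a * ‖x‖) * (s * ‖y‖) := mul_le_mul h5 h6 (Real.sqrt_nonneg _) (by positivity)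
  have : ‖y‖ * ‖y‖ ≤ (a * s * ‖x‖) * ‖y‖ := by
    rw [← sq]; calc ‖y‖ ^ 2 ≤ (a * ‖x‖) * (s * ‖y‖) := key
      _ = (a * s * ‖x‖) * ‖y‖ := by ring
  exact le_of_mul_le_mul_right this hpos
end

section
/- For complex matrices A (m×K) and B (n×K), the spectral norm of the Khatri-Rao (column-wise Kronecker) product A ∗ B satisfies ‖A ∗ B‖ ≤ ‖A‖ · ‖B‖. -/
open scoped ComplexOrder

-- squared norm of image
lemma sq_norm_eq {𝕜 : Type*} [RCLike 𝕜] {m n : Type*} [Fintype m] [Fintype n]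
    [DecidableEq n] (M : Matrix m n 𝕜) (v : EuclideanSpace 𝕜 n) :
    ‖Matrix.toEuclideanLin M v‖ ^ 2 = ∑ i, ‖M.mulVec v i‖ ^ 2 := by
  rw [EuclideanSpace.norm_eq, Real.sq_sqrt (by positivity)]
  rfl

lemma specNorm_nonneg {𝕜 : Type*} [RCLike 𝕜] {m n : Type*} [Fintype m] [Fintype n]
    [DecidableEq n] (A : Matrix m n 𝕜) : 0 ≤ specNorm A := norm_nonneg _

lemma sqLe {𝕜 : Type*} [RCLike 𝕜] {m n : Type*} [Fintype m] [Fintype n]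
    [DecidableEq n] (M : Matrix m n 𝕜) (v : EuclideanSpace 𝕜 n) :
    ∑ i, ‖M.mulVec v i‖ ^ 2 ≤ specNorm M ^ 2 * ‖v‖ ^ 2 := by
  rw [← sq_norm_eq, ← mul_pow]
  have h := (LinearMap.toContinuousLinearMap (Matrix.toEuclideanLin M)).le_opNorm v
  exact pow_le_pow_left₀ (norm_nonneg _) h 2

theorem stmt5 {m n K : ℕ} (A : Matrix (Fin m) (Fin K) ℂ) (B : Matrix (Fin n) (Fin K) ℂ) :
    specNorm (khatriRao A B) ≤ specNorm A * specNorm B := by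
  apply ContinuousLinearMap.opNorm_le_bound _ (mul_nonneg (specNorm_nonneg A) (specNorm_nonneg B))
  intro x
  have key : ‖Matrix.toEuclideanLin (khatriRao A B) x‖ ^ 2
      ≤ (specNorm A * specNorm B * ‖x‖) ^ 2 := by
    rw [sq_norm_eq]
    -- group sum over pairs
    have h1 : ∑ p : Fin m × Fin n, ‖(khatriRao A B).mulVec x p‖ ^ 2
        = ∑ j : Fin n, ∑ i : Fin m,
            ‖A.mulVec (fun k => (x : Fin K → ℂ) k * B j k) i‖ ^ 2 := by
      rw [Fintype.sum_prod_type, Finset.sum_comm]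
      refine Finset.sum_congr rfl fun j _ => Finset.sum_congr rfl fun i _ => ?_
      simp only [Matrix.mulVec, dotProduct, khatriRao, Matrix.of_apply]
      congr 2
      exact Finset.sum_congr rfl fun k _ => by ring
    rw [h1]
    have h2 : ∀ j : Fin n, ∑ i : Fin m,
        ‖A.mulVec (fun k => (x : Fin K → ℂ) k * B j k) i‖ ^ 2
        ≤ specNorm A ^ 2 * ∑ k : Fin K, ‖(x : Fin K → ℂ) k * B j k‖ ^ 2 := by
      intro j
      have := sqLe A ((WithLp.equiv 2 (Fin K → ℂ)).symm (fun k => (x : Fin K → ℂ) k * B j k))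
      rw [EuclideanSpace.norm_eq, Real.sq_sqrt (by positivity)] at this
      exact this
    calc ∑ j : Fin n, ∑ i : Fin m, ‖A.mulVec (fun k => (x : Fin K → ℂ) k * B j k) i‖ ^ 2
        ≤ ∑ j : Fin n, specNorm A ^ 2 * ∑ k : Fin K, ‖(x : Fin K → ℂ) k * B j k‖ ^ 2 :=
          Finset.sum_le_sum fun j _ => h2 j
      _ = specNorm A ^ 2 * ∑ k : Fin K, ‖(x : Fin K → ℂ) k‖ ^ 2 * ∑ j : Fin n, ‖B j k‖ ^ 2 := by
          rw [← Finset.mul_sum, Finset.sum_comm]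
          congr 1; congr 1; ext k
          rw [Finset.mul_sum]; congr 1; ext j
          rw [norm_mul, mul_pow]
      _ ≤ specNorm A ^ 2 * ∑ k : Fin K, ‖(x : Fin K → ℂ) k‖ ^ 2 * specNorm B ^ 2 := by
          apply mul_le_mul_of_nonneg_left _ (by positivity)
          apply Finset.sum_le_sum
          intro k _
          apply mul_le_mul_of_nonneg_left _ (by positivity)
          have := sqLe B (EuclideanSpace.single k (1 : ℂ))
          simp only [EuclideanSpace.norm_single, norm_one, one_pow, mul_one] at this
          refine le_trans (le_of_eq ?_) this
          refine Finset.sum_congr rfl fun j _ => ?_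
          have : B.mulVec (EuclideanSpace.single k (1:ℂ)) j = B j k := by
            simp [Matrix.mulVec, dotProduct, EuclideanSpace.single_apply,
              mul_ite, Finset.sum_ite_eq']
          rw [this]
      _ = (specNorm A * specNorm B * ‖x‖) ^ 2 := by
          have hx : ‖x‖ ^ 2 = ∑ i, ‖(x : Fin K → ℂ) i‖ ^ 2 := by
            rw [EuclideanSpace.norm_eq, Real.sq_sqrt (by positivity)]
          rw [← Finset.sum_mul, mul_pow, mul_pow, hx]
          ring
  calc ‖Matrix.toEuclideanLin (khatriRao A B) x‖
      = Real.sqrt (‖Matrix.toEuclideanLin (khatriRao A B) x‖ ^ 2) := by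
        rw [Real.sqrt_sq (norm_nonneg _)]
    _ ≤ Real.sqrt ((specNorm A * specNorm B * ‖x‖) ^ 2) := Real.sqrt_le_sqrt key
    _ = specNorm A * specNorm B * ‖x‖ := Real.sqrt_sq (mul_nonneg (mul_nonneg (specNorm_nonneg A) (specNorm_nonneg B)) (norm_nonneg x))
end

section
/- Let Q be a K×K positive semidefinite Hermitian matrix and D = Q ⊙ I_K its diagonal part. Then for any Hermitian K×K matrix H, σ_min(Re(Q ⊙ (cI + H))) ≥ c·min_k Q_{k,k} - ‖Q‖_{∞→2}·‖H‖ for any c > 0, provided the right-hand side is nonnegative. -/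
open scoped ComplexOrder

/-- column norm as an applied Euclidean operator norm -/
lemma col_norm_eq {K : ℕ} (H : Matrix (Fin K) (Fin K) ℂ) (i : Fin K) :
    ‖Matrix.toEuclideanLin H (EuclideanSpace.single i 1)‖
      = Real.sqrt (∑ j, ‖H j i‖ ^ 2) := by
  rw [EuclideanSpace.norm_eq]
  congr 1
  refine Finset.sum_congr rfl fun j _ => ?_
  congr 1
  rw [show (EuclideanSpace.single i (1:ℂ)) = (WithLp.equiv 2 _).symm (Pi.single i 1) from rfl,
    WithLp.equiv_symm_apply, Matrix.toEuclideanLin_apply_piLp_toLp]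
  simp [Matrix.mulVec_single]

/-- row sums of squared norms of a Hermitian matrix are bounded by the squared operator norm. -/
lemma row_sq_le {K : ℕ} (H : Matrix (Fin K) (Fin K) ℂ) (hH : H.IsHermitian) (i : Fin K) :
    (∑ j, ‖H i j‖ ^ 2) ≤ specNorm H ^ 2 := by
  have h1 : (∑ j, ‖H i j‖ ^ 2) = ∑ j, ‖H j i‖ ^ 2 := by
    refine Finset.sum_congr rfl fun j _ => ?_
    rw [← hH.apply j i]
    simp
  have h2 : Real.sqrt (∑ j, ‖H j i‖ ^ 2) ≤ specNorm H := by
    rw [← col_norm_eq]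
    have h := (LinearMap.toContinuousLinearMap (Matrix.toEuclideanLin H)).le_opNorm
      (EuclideanSpace.single i (1:ℂ))
    rw [EuclideanSpace.norm_single, norm_one, mul_one,
      LinearMap.coe_toContinuousLinearMap'] at h
    exact h
  calc (∑ j, ‖H i j‖ ^ 2) = Real.sqrt (∑ j, ‖H j i‖ ^ 2) ^ 2 := by
        rw [Real.sq_sqrt (Finset.sum_nonneg fun j _ => sq_nonneg _), h1]
    _ ≤ specNorm H ^ 2 := pow_le_pow_left₀ (Real.sqrt_nonneg _) h2 2

open Matrix in
/-- the key per-vector bound -/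
lemma key_bound {K : ℕ} (Q H : Matrix (Fin K) (Fin K) ℂ)
    (hH : H.IsHermitian) (c : ℝ) (hc : 0 < c)
    (v : EuclideanSpace ℝ (Fin K)) (hv : ‖v‖ = 1) :
    c * (⨅ k, (Q k k).re) - maxColNorm Q * specNorm H ≤
      ‖Matrix.toEuclideanLin ((Matrix.hadamard Q ((c : ℂ) • (1 : Matrix (Fin K) (Fin K) ℂ) + H)).map
        Complex.re) v‖ := by
  classical
  set M : Matrix (Fin K) (Fin K) ℝ :=
    (Matrix.hadamard Q ((c : ℂ) • (1 : Matrix (Fin K) (Fin K) ℂ) + H)).map Complex.re with hMdef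
  set B : ℝ := maxColNorm Q * specNorm H with hBdef
  have hmc0 : 0 ≤ maxColNorm Q := Real.iSup_nonneg fun j => Real.sqrt_nonneg _
  have hsp0 : 0 ≤ specNorm H := norm_nonneg _
  have hB0 : 0 ≤ B := mul_nonneg hmc0 hsp0
  -- sum of squares of v is 1
  have hv2 : ∑ i, v i ^ 2 = 1 := by
    have h := hv
    rw [EuclideanSpace.norm_eq] at h
    have h2 : ∑ i, ‖v i‖ ^ 2 = 1 := by
      have := Real.sqrt_eq_one.mp h
      simpa using this
    simpa [Real.norm_eq_abs, sq_abs] using h2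
  -- inner product formula
  have hip : (inner ℝ (Matrix.toEuclideanLin M v) v : ℝ) = ∑ i, (∑ j, M i j * v j) * v i := by
    simp [Matrix.toEuclideanLin_apply, PiLp.inner_apply, RCLike.inner_apply, Matrix.mulVec,
      dotProduct, mul_comm]
  -- entries of M
  have hMij : ∀ i j, M i j = c * (if i = j then (Q i j).re else 0) + (Q i j * H i j).re := by
    intro i j
    simp only [hMdef, Matrix.map_apply, Matrix.hadamard_apply, Matrix.add_apply,
      Matrix.smul_apply, Matrix.one_apply, mul_add, Complex.add_re]
    split_ifs with h
    · simp [Complex.mul_re, mul_comm]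
    · simp
  -- decompose the quadratic form
  have hsum : ∑ i, (∑ j, M i j * v j) * v i
      = c * (∑ i, (Q i i).re * v i ^ 2) + ∑ i, (∑ j, (Q i j * H i j).re * v j) * v i := by
    have hinnersum : ∀ i, (∑ j, M i j * v j)
        = c * ((Q i i).re * v i) + ∑ j, (Q i j * H i j).re * v j := by
      intro i
      simp_rw [hMij, add_mul, Finset.sum_add_distrib, mul_assoc, ite_mul, zero_mul]
      rw [← Finset.mul_sum, Finset.sum_ite_eq]
      simp
    simp_rw [hinnersum, add_mul, Finset.sum_add_distrib]
    congr 1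
    rw [Finset.mul_sum]
    refine Finset.sum_congr rfl fun i _ => by ring
  set S : ℝ := ∑ i, (∑ j, (Q i j * H i j).re * v j) * v i with hSdef
  -- bound on |S|
  have hSB : |S| ≤ B := by
    set x : Fin K → ℂ := fun i => ∑ j, Q i j * H i j * (v j : ℂ) with hxdef
    have hxre : ∀ i, (x i).re = ∑ j, (Q i j * H i j).re * v j := by
      intro i
      rw [hxdef]
      rw [Complex.re_sum]
      refine Finset.sum_congr rfl fun j _ => ?_
      simp [Complex.mul_re]
    have hS2 : S ^ 2 ≤ ∑ i, (x i).re ^ 2 := by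
      have := Finset.sum_mul_sq_le_sq_mul_sq Finset.univ (fun i => (x i).re) (fun i => v i)
      calc S ^ 2 = (∑ i, (x i).re * v i) ^ 2 := by
            rw [hSdef]; congr 1; exact Finset.sum_congr rfl fun i _ => by rw [hxre]
        _ ≤ (∑ i, (x i).re ^ 2) * ∑ i, v i ^ 2 := this
        _ = ∑ i, (x i).re ^ 2 := by rw [hv2, mul_one]
    have hre_abs : ∑ i, (x i).re ^ 2 ≤ ∑ i, ‖x i‖ ^ 2 := by
      refine Finset.sum_le_sum fun i _ => ?_
      rw [← sq_abs ((x i).re)]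
      exact pow_le_pow_left₀ (abs_nonneg _) (Complex.abs_re_le_norm _) 2
    have hxi : ∀ i, ‖x i‖ ^ 2 ≤ (∑ j, ‖H i j‖ ^ 2) * ∑ j, ‖Q i j‖ ^ 2 * v j ^ 2 := by
      intro i
      have h1 : ‖x i‖ ≤ ∑ j, ‖H i j‖ * ‖Q i j * (v j : ℂ)‖ := by
        rw [hxdef]
        calc ‖∑ j, Q i j * H i j * (v j : ℂ)‖ ≤ ∑ j, ‖Q i j * H i j * (v j : ℂ)‖ :=
              norm_sum_le _ _
          _ = ∑ j, ‖H i j‖ * ‖Q i j * (v j : ℂ)‖ := by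
              refine Finset.sum_congr rfl fun j _ => ?_
              rw [norm_mul, norm_mul, norm_mul]; ring
      calc ‖x i‖ ^ 2 ≤ (∑ j, ‖H i j‖ * ‖Q i j * (v j : ℂ)‖) ^ 2 :=
            pow_le_pow_left₀ (norm_nonneg _) h1 2
        _ ≤ (∑ j, ‖H i j‖ ^ 2) * ∑ j, ‖Q i j * (v j : ℂ)‖ ^ 2 :=
            Finset.sum_mul_sq_le_sq_mul_sq _ _ _
        _ = (∑ j, ‖H i j‖ ^ 2) * ∑ j, ‖Q i j‖ ^ 2 * v j ^ 2 := by
            congr 1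
            refine Finset.sum_congr rfl fun j _ => ?_
            rw [norm_mul, mul_pow]
            congr 1
            rw [Complex.norm_real, Real.norm_eq_abs, sq_abs]
    have hcol : ∀ j : Fin K, (∑ i, ‖Q i j‖ ^ 2) ≤ maxColNorm Q ^ 2 := by
      intro j
      have h1 : Real.sqrt (∑ i, ‖Q i j‖ ^ 2) ≤ maxColNorm Q := by
        unfold maxColNorm
        exact le_ciSup (f := fun j : Fin K => Real.sqrt (∑ i, ‖Q i j‖ ^ 2))
          (Set.Finite.bddAbove (Set.finite_range _)) j
      calc (∑ i, ‖Q i j‖ ^ 2) = Real.sqrt (∑ i, ‖Q i j‖ ^ 2) ^ 2 :=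
            (Real.sq_sqrt (Finset.sum_nonneg fun i _ => sq_nonneg _)).symm
        _ ≤ maxColNorm Q ^ 2 := pow_le_pow_left₀ (Real.sqrt_nonneg _) h1 2
    have hfinal : ∑ i, ‖x i‖ ^ 2 ≤ B ^ 2 := by
      calc ∑ i, ‖x i‖ ^ 2
          ≤ ∑ i, (∑ j, ‖H i j‖ ^ 2) * ∑ j, ‖Q i j‖ ^ 2 * v j ^ 2 :=
            Finset.sum_le_sum fun i _ => hxi i
        _ ≤ ∑ i, specNorm H ^ 2 * ∑ j, ‖Q i j‖ ^ 2 * v j ^ 2 := by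
            refine Finset.sum_le_sum fun i _ => ?_
            exact mul_le_mul_of_nonneg_right (row_sq_le H hH i)
              (Finset.sum_nonneg fun j _ => mul_nonneg (sq_nonneg _) (sq_nonneg _))
        _ = specNorm H ^ 2 * ∑ j, (∑ i, ‖Q i j‖ ^ 2) * v j ^ 2 := by
            rw [← Finset.mul_sum, Finset.sum_comm]
            congr 1
            refine Finset.sum_congr rfl fun j _ => ?_
            rw [Finset.sum_mul]
        _ ≤ specNorm H ^ 2 * ∑ j, maxColNorm Q ^ 2 * v j ^ 2 := by
            refine mul_le_mul_of_nonneg_left ?_ (sq_nonneg _)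
            exact Finset.sum_le_sum fun j _ =>
              mul_le_mul_of_nonneg_right (hcol j) (sq_nonneg _)
        _ = B ^ 2 := by
            rw [← Finset.mul_sum, hv2, mul_one, hBdef, mul_pow]
            ring
    have hS2' : S ^ 2 ≤ B ^ 2 := le_trans hS2 (le_trans hre_abs hfinal)
    calc |S| = Real.sqrt (S ^ 2) := (Real.sqrt_sq_eq_abs S).symm
      _ ≤ Real.sqrt (B ^ 2) := Real.sqrt_le_sqrt hS2'
      _ = B := Real.sqrt_sq hB0
  -- lower bound on diagonal part
  have hinf : (⨅ k, (Q k k).re) ≤ ∑ i, (Q i i).re * v i ^ 2 := by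
    calc (⨅ k, (Q k k).re) = ∑ i, (⨅ k, (Q k k).re) * v i ^ 2 := by
          rw [← Finset.mul_sum, hv2, mul_one]
      _ ≤ ∑ i, (Q i i).re * v i ^ 2 :=
          Finset.sum_le_sum fun i _ => mul_le_mul_of_nonneg_right
            (ciInf_le (Set.Finite.bddBelow (Set.finite_range _)) i) (sq_nonneg _)
  -- put it together
  have h1 : c * (⨅ k, (Q k k).re) - B ≤ (inner ℝ (Matrix.toEuclideanLin M v) v : ℝ) := by
    rw [hip, hsum]
    have := (abs_le.mp hSB).1
    have h2 := mul_le_mul_of_nonneg_left hinf hc.le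
    linarith
  have h2 : (inner ℝ (Matrix.toEuclideanLin M v) v : ℝ) ≤ ‖Matrix.toEuclideanLin M v‖ := by
    calc (inner ℝ (Matrix.toEuclideanLin M v) v : ℝ)
        ≤ ‖Matrix.toEuclideanLin M v‖ * ‖v‖ := real_inner_le_norm _ _
      _ = ‖Matrix.toEuclideanLin M v‖ := by rw [hv, mul_one]
  exact le_trans h1 h2

open Matrix in
theorem stmt14 {K : ℕ} (Q H : Matrix (Fin K) (Fin K) ℂ)
    (hQ : Q.PosSemidef) (hH : H.IsHermitian) (c : ℝ) (hc : 0 < c)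
    (hnn : 0 ≤ c * (⨅ k, (Q k k).re) - maxColNorm Q * specNorm H) :
    c * (⨅ k, (Q k k).re) - maxColNorm Q * specNorm H ≤
      sigmaMin ((Matrix.hadamard Q ((c : ℂ) • (1 : Matrix (Fin K) (Fin K) ℂ) + H)).map
        Complex.re) := by
  classical
  rcases Nat.eq_zero_or_pos K with hK | hK
  · subst hK
    haveI : IsEmpty (Fin 0) := inferInstance
    haveI hsE : IsEmpty (Metric.sphere (0 : EuclideanSpace ℝ (Fin 0)) 1) := by
      constructor
      rintro ⟨v, hv⟩
      rw [Metric.mem_sphere, dist_zero_right] at hv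
      have hv0 : v = 0 := Subsingleton.elim _ _
      rw [hv0, norm_zero] at hv
      norm_num at hv
    have h1 : (⨅ k : Fin 0, (Q k k).re) = 0 := Real.iInf_of_isEmpty _
    have h2 : maxColNorm Q = 0 := Real.iSup_of_isEmpty _
    have h3 : sigmaMin ((Matrix.hadamard Q ((c : ℂ) • (1 : Matrix (Fin 0) (Fin 0) ℂ) + H)).map
        Complex.re) = 0 := Real.iInf_of_isEmpty _
    rw [h1, h2, h3]
    simp
  · haveI : Nonempty (Metric.sphere (0 : EuclideanSpace ℝ (Fin K)) 1) := by
      refine ⟨⟨EuclideanSpace.single (⟨0, hK⟩ : Fin K) (1:ℝ), ?_⟩⟩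
      simp [EuclideanSpace.norm_single]
    refine le_ciInf ?_
    rintro ⟨v, hv⟩
    rw [Metric.mem_sphere, dist_zero_right] at hv
    exact key_bound Q H hH c hc v hv
end
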